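/- arXiv:2112.09573 — 2 statements merged into one kernel-verified Lean document; each statement's English description precedes it below -/
import Mathlib

section
/- Let D be a finite database of finite labeled graphs, let min_sup ≥ 1, and let g_0 be a frequent labeled graph in D. Then there exist an integer n ≥ 0 and labeled graphs g_1, …, g_n such that (i) g_n is closed in D, (ii) for every 0 ≤ i < n, g_{i+1} = g_i ⋄ e_i is a one-edge extension of g_i, (iii) for every 0 ≤ i < n, g_i and g_{i+1} have equivalent occurrence in D, and moreover n ≤ max_{G ∈ D} |E(G)|. -/
/-- A labeled graph: a finite simple graph with vertex and edge labels in `L`. -/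
structure LabeledGraph (L : Type) : Type 1 where
  V : Type
  fintypeV : Fintype V
  graph : SimpleGraph V
  vlabel : V → L
  elabel : Sym2 V → L

/-- A subgraph isomorphism from `g` to `g'`: an injective vertex map preserving
vertex labels, mapping edges to edges, and preserving edge labels. -/
structure SubgraphIso {L : Type} (g g' : LabeledGraph L) : Type where
  toFun : g.V → g'.V
  inj : Function.Injective toFun
  vlabel_eq : ∀ v, g'.vlabel (toFun v) = g.vlabel v
  map_adj : ∀ u v, g.graph.Adj u v → g'.graph.Adj (toFun u) (toFun v)
  elabel_eq : ∀ u v, g.graph.Adj u v → g'.elabel s(toFun u, toFun v) = g.elabel s(u, v)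

/-- The identity subgraph isomorphism. -/
def SubgraphIso.refl {L : Type} (g : LabeledGraph L) : SubgraphIso g g where
  toFun := id
  inj := fun _ _ h => h
  vlabel_eq := fun _ => rfl
  map_adj := fun _ _ h => h
  elabel_eq := fun _ _ _ => rfl

/-- Composition of subgraph isomorphisms. -/
def SubgraphIso.comp {L : Type} {g₁ g₂ g₃ : LabeledGraph L}
    (f : SubgraphIso g₁ g₂) (f' : SubgraphIso g₂ g₃) : SubgraphIso g₁ g₃ where
  toFun := f'.toFun ∘ f.toFun
  inj := f'.inj.comp f.inj
  vlabel_eq := fun v => by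
    simp only [Function.comp_apply, f'.vlabel_eq, f.vlabel_eq]
  map_adj := fun u v h => f'.map_adj _ _ (f.map_adj u v h)
  elabel_eq := fun u v h => by
    simp only [Function.comp_apply]
    rw [f'.elabel_eq _ _ (f.map_adj u v h), f.elabel_eq u v h]

/-- `g'` is a one-edge extension `g ⋄ e` of `g`: it comes with the inclusion
subgraph isomorphism `ρ : g → g'`, and `g'` consists of the image of `g`
plus exactly one new edge `e` (with at most one new endpoint vertex). -/
structure OneEdgeExtension {L : Type} (g g' : LabeledGraph L) : Type where
  ρ : SubgraphIso g g'
  e : Sym2 g'.V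
  e_mem : e ∈ g'.graph.edgeSet
  e_new : ∀ u v, g.graph.Adj u v → s(ρ.toFun u, ρ.toFun v) ≠ e
  edge_cover : ∀ u' v', g'.graph.Adj u' v' →
    s(u', v') = e ∨ ∃ u v, g.graph.Adj u v ∧ s(ρ.toFun u, ρ.toFun v) = s(u', v')
  vertex_cover : ∀ v' : g'.V, (∃ v, ρ.toFun v = v') ∨ v' ∈ e
  new_vertex_unique : ∀ v₁ v₂ : g'.V, v₁ ∈ e → v₂ ∈ e →
    (¬ ∃ v, ρ.toFun v = v₁) → (¬ ∃ v, ρ.toFun v = v₂) → v₁ = v₂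

/-- The occurrence `I(g, D)`: the total number of subgraph isomorphisms of `g`
into the graphs of the database `D`. -/
noncomputable def occurrence {L : Type} (g : LabeledGraph L) (D : List (LabeledGraph L)) : ℕ :=
  (D.map fun G => Nat.card (SubgraphIso g G)).sum

/-- A subgraph isomorphism `f` of `g` into `G` is extendable w.r.t.
`ρ : g → g'` if it lifts along `ρ` to a subgraph isomorphism of `g'` into `G`. -/
def IsExtendable {L : Type} {g g' G : LabeledGraph L}
    (ρ : SubgraphIso g g') (f : SubgraphIso g G) : Prop :=
  ∃ f' : SubgraphIso g' G, ∀ v, f.toFun v = f'.toFun (ρ.toFun v)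

/-- The extended occurrence `L(g, g', D)`: the total number of extendable
subgraph isomorphisms of `g` into the graphs of `D`, w.r.t. the one-edge
extension `g' = g ⋄ e`. -/
noncomputable def extendedOccurrence {L : Type} {g g' : LabeledGraph L}
    (ext : OneEdgeExtension g g') (D : List (LabeledGraph L)) : ℕ :=
  (D.map fun G => Nat.card {f : SubgraphIso g G // IsExtendable ext.ρ f}).sum

/-- `g` and its one-edge extension `g'` have equivalent occurrence in `D`. -/
def equivOccurrence {L : Type} {g g' : LabeledGraph L}
    (ext : OneEdgeExtension g g') (D : List (LabeledGraph L)) : Prop :=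
  occurrence g D = extendedOccurrence ext D

/-- The support of `g` in `D`: the number of graphs of `D` admitting at least
one subgraph isomorphism from `g`. -/
noncomputable def support {L : Type} (g : LabeledGraph L) (D : List (LabeledGraph L)) : ℕ :=
  Nat.card {i : Fin D.length // Nonempty (SubgraphIso g (D.get i))}

/-- `g` is frequent in `D` w.r.t. the threshold `min_sup`. -/
def Frequent {L : Type} (D : List (LabeledGraph L)) (min_sup : ℕ)
    (g : LabeledGraph L) : Prop :=
  min_sup ≤ support g D

/-- A frequent graph `g` is closed in `D` if no one-edge extension of `g` has
equivalent occurrence with `g`. -/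
def Closed {L : Type} (D : List (LabeledGraph L)) (min_sup : ℕ)
    (g : LabeledGraph L) : Prop :=
  Frequent D min_sup g ∧
    ∀ (g' : LabeledGraph L) (ext : OneEdgeExtension g g'), ¬ equivOccurrence ext D

/-- The composite inclusion subgraph isomorphism along a chain of one-edge
extensions. -/
def chainComp {L : Type} {gs : ℕ → LabeledGraph L} {n : ℕ}
    (ext : ∀ i, i < n → OneEdgeExtension (gs i) (gs (i + 1))) :
    ∀ i, i ≤ n → SubgraphIso (gs 0) (gs i)
  | 0, _ => SubgraphIso.refl _
  | i + 1, h => (chainComp ext i (Nat.le_of_succ_le h)).comp (ext i h).ρ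

/-- The number of edges of a labeled graph. -/
noncomputable def edgeCount {L : Type} (g : LabeledGraph L) : ℕ :=
  Nat.card g.graph.edgeSet

/-- `max_{G ∈ D} |E(G)|`. -/
noncomputable def maxEdgeCount {L : Type} (D : List (LabeledGraph L)) : ℕ :=
  (D.map edgeCount).foldr max 0

section Aux

variable {L : Type}

instance subgraphIso_finite (g g' : LabeledGraph L) : Finite (SubgraphIso g g') := by
  haveI := g.fintypeV
  haveI := g'.fintypeV
  exact Finite.of_injective (fun f => f.toFun) (by
    intro a b h; cases a; cases b; simpa using h)

lemma list_sum_pointwise {α : Type*} (l : List α) (f h : α → ℕ)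
    (hle : ∀ a ∈ l, h a ≤ f a) (hsum : (l.map f).sum = (l.map h).sum) :
    ∀ a ∈ l, f a = h a := by
  induction l with
  | nil => simp
  | cons a t ih =>
    simp only [List.map_cons, List.sum_cons] at hsum
    have h1 : h a ≤ f a := hle a List.mem_cons_self
    have h2 : (t.map h).sum ≤ (t.map f).sum :=
      List.sum_le_sum (fun b hb => hle b (List.mem_cons_of_mem _ hb))
    have hfa : f a = h a := by omega
    have hts : (t.map f).sum = (t.map h).sum := by omega
    intro b hb
    rcases List.mem_cons.mp hb with rfl | hb
    · exact hfa
    · exact ih (fun c hc => hle c (List.mem_cons_of_mem _ hc)) hts b hb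

lemma all_extendable {g g' : LabeledGraph L} (ext : OneEdgeExtension g g')
    (D : List (LabeledGraph L)) (heq : equivOccurrence ext D) :
    ∀ G ∈ D, ∀ f : SubgraphIso g G, IsExtendable ext.ρ f := by
  classical
  have key := list_sum_pointwise D (fun G => Nat.card (SubgraphIso g G))
    (fun G => Nat.card {f : SubgraphIso g G // IsExtendable ext.ρ f})
    (fun G _ => Nat.card_le_card_of_injective Subtype.val Subtype.val_injective) heq
  intro G hG f
  have hcard := key G hG
  haveI := Fintype.ofFinite (SubgraphIso g G)
  rw [Nat.card_eq_fintype_card, Nat.card_eq_fintype_card, Fintype.card_subtype] at hcard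
  have huniv : (Finset.univ.filter (fun f : SubgraphIso g G => IsExtendable ext.ρ f))
      = Finset.univ := Finset.eq_univ_of_card _ hcard.symm
  have : f ∈ Finset.univ.filter (fun f : SubgraphIso g G => IsExtendable ext.ρ f) := by
    rw [huniv]; exact Finset.mem_univ f
  exact (Finset.mem_filter.mp this).2

lemma support_eq_of_equiv {g g' : LabeledGraph L} (ext : OneEdgeExtension g g')
    (D : List (LabeledGraph L)) (heq : equivOccurrence ext D) :
    support g D = support g' D := by
  apply Nat.card_congr
  apply Equiv.subtypeEquivRight
  intro i
  constructor
  · rintro ⟨f⟩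
    obtain ⟨f', -⟩ := all_extendable ext D heq (D.get i) (D.get_mem i) f
    exact ⟨f'⟩
  · rintro ⟨f'⟩
    exact ⟨ext.ρ.comp f'⟩

lemma map_edge_mem {g G : LabeledGraph L} (f : SubgraphIso g G) :
    ∀ s ∈ g.graph.edgeSet, s.map f.toFun ∈ G.graph.edgeSet := by
  intro s
  induction s using Sym2.ind with
  | _ u v =>
    intro h
    simpa using f.map_adj u v h

lemma edgeCount_le_of_iso {g G : LabeledGraph L} (f : SubgraphIso g G) :
    edgeCount g ≤ edgeCount G := by
  haveI := g.fintypeV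
  haveI := G.fintypeV
  apply Nat.card_le_card_of_injective
    (fun s : g.graph.edgeSet => (⟨s.val.map f.toFun, map_edge_mem f s.val s.property⟩ :
      G.graph.edgeSet))
  intro a b hab
  apply Subtype.ext
  exact Sym2.map.injective f.inj (by simpa using congrArg Subtype.val hab)

lemma map_ne_e {g g' : LabeledGraph L} (ext : OneEdgeExtension g g') :
    ∀ s ∈ g.graph.edgeSet, s.map ext.ρ.toFun ≠ ext.e := by
  intro s
  induction s using Sym2.ind with
  | _ u v =>
    intro hs h
    exact ext.e_new u v ((SimpleGraph.mem_edgeSet g.graph).mp hs) (by simpa using h)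

lemma edgeCount_lt_of_ext {g g' : LabeledGraph L} (ext : OneEdgeExtension g g') :
    edgeCount g + 1 ≤ edgeCount g' := by
  haveI := g.fintypeV
  haveI := g'.fintypeV
  have hmain : Nat.card (g.graph.edgeSet ⊕ Unit) ≤ Nat.card g'.graph.edgeSet := by
    apply Nat.card_le_card_of_injective
      (fun x : g.graph.edgeSet ⊕ Unit => match x with
        | Sum.inl s => (⟨s.val.map ext.ρ.toFun, map_edge_mem ext.ρ s.val s.property⟩ :
            g'.graph.edgeSet)
        | Sum.inr _ => ⟨ext.e, ext.e_mem⟩)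
    rintro (a | a) (b | b) hab
    · have := congrArg Subtype.val hab
      simp only at this
      exact congrArg Sum.inl (Subtype.ext (Sym2.map.injective ext.ρ.inj this))
    · exact absurd (by simpa using congrArg Subtype.val hab)
        (map_ne_e ext a.val a.property)
    · exact absurd (by simpa using (congrArg Subtype.val hab).symm)
        (map_ne_e ext b.val b.property)
    · cases a; cases b; rfl
  have hu : Nat.card Unit = 1 := Nat.card_unique
  rw [Nat.card_sum, hu] at hmain
  exact hmain

lemma mem_le_foldr_max (l : List ℕ) (x : ℕ) (hx : x ∈ l) : x ≤ l.foldr max 0 := by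
  induction l with
  | nil => simp at hx
  | cons a t ih =>
    rcases List.mem_cons.mp hx with rfl | h
    · exact le_max_left _ _
    · exact le_trans (ih h) (le_max_right _ _)

lemma edgeCount_le_max {g : LabeledGraph L} {D : List (LabeledGraph L)} {min_sup : ℕ}
    (hmin : 1 ≤ min_sup) (hfreq : Frequent D min_sup g) :
    edgeCount g ≤ maxEdgeCount D := by
  have hsup : 1 ≤ support g D := le_trans hmin hfreq
  have hne : Nonempty {i : Fin D.length // Nonempty (SubgraphIso g (D.get i))} := by
    by_contra h
    rw [not_nonempty_iff] at h
    rw [support, Nat.card_of_isEmpty] at hsup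
    omega
  obtain ⟨⟨i, ⟨f⟩⟩⟩ := hne
  calc edgeCount g ≤ edgeCount (D.get i) := edgeCount_le_of_iso f
    _ ≤ maxEdgeCount D := mem_le_foldr_max _ _
        (List.mem_map_of_mem (f := edgeCount) (D.get_mem i))

lemma aux_chain (D : List (LabeledGraph L)) (min_sup : ℕ) (hmin : 1 ≤ min_sup) :
    ∀ k : ℕ, ∀ g : LabeledGraph L, Frequent D min_sup g →
      maxEdgeCount D - edgeCount g ≤ k →
      ∃ (n : ℕ) (gs : ℕ → LabeledGraph L)
        (ext : ∀ i, i < n → OneEdgeExtension (gs i) (gs (i + 1))),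
        gs 0 = g ∧
        Closed D min_sup (gs n) ∧
        (∀ i (h : i < n), equivOccurrence (ext i h) D) ∧
        n ≤ maxEdgeCount D - edgeCount g := by
  intro k
  induction k with
  | zero =>
    intro g hfreq hk
    by_cases hc : Closed D min_sup g
    · exact ⟨0, fun _ => g, fun i h => absurd h (Nat.not_lt_zero i), rfl, hc,
        fun i h => absurd h (Nat.not_lt_zero i), Nat.zero_le _⟩
    · exfalso
      rw [Closed, not_and] at hc
      have := hc hfreq
      push_neg at this
      obtain ⟨g', ext, heq⟩ := this
      have hfreq' : Frequent D min_sup g' := by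
        rwa [Frequent, ← support_eq_of_equiv ext D heq]
      have h1 := edgeCount_lt_of_ext ext
      have h2 := edgeCount_le_max hmin hfreq'
      omega
  | succ k ih =>
    intro g hfreq hk
    by_cases hc : Closed D min_sup g
    · exact ⟨0, fun _ => g, fun i h => absurd h (Nat.not_lt_zero i), rfl, hc,
        fun i h => absurd h (Nat.not_lt_zero i), Nat.zero_le _⟩
    · rw [Closed, not_and] at hc
      have := hc hfreq
      push_neg at this
      obtain ⟨g', ext, heq⟩ := this
      have hfreq' : Frequent D min_sup g' := by
        rwa [Frequent, ← support_eq_of_equiv ext D heq]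
      have h1 := edgeCount_lt_of_ext ext
      have h2 := edgeCount_le_max hmin hfreq'
      obtain ⟨n', gs', ext', hgs0, hclosed, hequiv, hbound⟩ :=
        ih g' hfreq' (by omega)
      subst hgs0
      refine ⟨n' + 1, fun i => Nat.rec g (fun j _ => gs' j) i,
        fun i h => match i, h with
          | 0, _ => ext
          | j + 1, h => ext' j (by omega),
        rfl, hclosed, ?_, by omega⟩
      intro i h
      match i, h with
      | 0, _ => exact heq
      | j + 1, h => exact hequiv j (by omega)

end Aux

/-- every frequent graph `g₀` in `D` admits a chain of one-edge
extensions with equivalent occurrence leading to a closed graph, of length at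
most `max_{G ∈ D} |E(G)|`. -/
theorem frequent_has_transitive_equiv_closed {L : Type}
    (D : List (LabeledGraph L)) (min_sup : ℕ) (hmin : 1 ≤ min_sup)
    (g₀ : LabeledGraph L) (hfreq : Frequent D min_sup g₀) :
    ∃ (n : ℕ) (gs : ℕ → LabeledGraph L)
      (ext : ∀ i, i < n → OneEdgeExtension (gs i) (gs (i + 1))),
      gs 0 = g₀ ∧
      Closed D min_sup (gs n) ∧
      (∀ i (h : i < n), equivOccurrence (ext i h) D) ∧
      n ≤ maxEdgeCount D := by
  obtain ⟨n, gs, ext, h0, hcl, heq, hb⟩ :=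
    aux_chain D min_sup hmin (maxEdgeCount D) g₀ hfreq (Nat.sub_le _ _)
  exact ⟨n, gs, ext, h0, hcl, heq, le_trans hb (Nat.sub_le _ _)⟩
end

section
/- Let D be a finite database of finite labeled graphs and suppose the labeled graphs g_0 and g_n have transitive equivalent occurrence in D via the chain g_0, g_1, …, g_n with inclusion subgraph isomorphisms ρ_i : g_i → g_{i+1}, and let ρ : g_0 → g_n be the composite ρ_{n-1} ∘ ⋯ ∘ ρ_0. Then for every subgraph isomorphism f of g_0 into a graph G ∈ D there exists a subgraph isomorphism f'' of g_n into G with f(v) = f''(ρ(v)) for every vertex v of g_0. Consequently the support of g_0 in D equals the support of g_n in D. -/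
instance subgraphIsoFinite {L : Type} (g g' : LabeledGraph L) : Finite (SubgraphIso g g') := by
  haveI := g.fintypeV; haveI := g'.fintypeV
  apply Finite.of_injective (fun f => f.toFun)
  intro a b h
  cases a; cases b; simp only at h; subst h; rfl

lemma sum_eq_pointwise {α : Type*} (l : List α) (f g : α → ℕ)
    (hle : ∀ a ∈ l, g a ≤ f a) (hsum : (l.map f).sum = (l.map g).sum) :
    ∀ a ∈ l, f a = g a := by
  induction l with
  | nil => intro a ha; simp at ha
  | cons a l ih =>
    simp only [List.map_cons, List.sum_cons] at hsum
    have h1 : g a ≤ f a := hle a List.mem_cons_self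
    have h2 : (l.map g).sum ≤ (l.map f).sum := by
      apply List.sum_le_sum
      intro x hx
      exact hle x (List.mem_cons_of_mem a hx)
    have hfa : f a = g a := by omega
    have hrest : (l.map f).sum = (l.map g).sum := by omega
    intro x hx
    rcases List.mem_cons.mp hx with rfl | hx
    · exact hfa
    · exact ih (fun b hb => hle b (List.mem_cons_of_mem a hb)) hrest x hx

lemma step_extendable {L : Type} {g g' : LabeledGraph L} (ext : OneEdgeExtension g g')
    (D : List (LabeledGraph L)) (h : equivOccurrence ext D) :
    ∀ G ∈ D, ∀ f : SubgraphIso g G, IsExtendable ext.ρ f := by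
  intro G hG f
  have hcard : Nat.card (SubgraphIso g G)
      = Nat.card {f : SubgraphIso g G // IsExtendable ext.ρ f} := by
    have h' : (D.map fun G => Nat.card (SubgraphIso g G)).sum
        = (D.map fun G => Nat.card {f : SubgraphIso g G // IsExtendable ext.ρ f}).sum := h
    exact sum_eq_pointwise D (fun H => Nat.card (SubgraphIso g H))
      (fun H => Nat.card {f : SubgraphIso g H // IsExtendable ext.ρ f})
      (fun H _ => Nat.card_le_card_of_injective _ Subtype.val_injective) h' G hG
  have hbij : Function.Bijective
      (Subtype.val : {f : SubgraphIso g G // IsExtendable ext.ρ f} → SubgraphIso g G) :=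
    (Nat.bijective_iff_injective_and_card _).mpr ⟨Subtype.val_injective, hcard.symm⟩
  obtain ⟨⟨_, hp⟩, rfl⟩ := hbij.2 f
  exact hp

/-- along a chain witnessing transitive equivalent occurrence,
every subgraph isomorphism of `g₀ = gs 0` into a graph of `D` lifts along the
composite inclusion to one of `g_n = gs n`; consequently supports agree. -/
theorem transEquivOccurrence_lift_and_support_eq {L : Type}
    (D : List (LabeledGraph L)) (n : ℕ) (gs : ℕ → LabeledGraph L)
    (ext : ∀ i, i < n → OneEdgeExtension (gs i) (gs (i + 1)))
    (heq : ∀ i (h : i < n), equivOccurrence (ext i h) D) :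
    (∀ G ∈ D, ∀ f : SubgraphIso (gs 0) G,
      ∃ f'' : SubgraphIso (gs n) G,
        ∀ v, f.toFun v = f''.toFun ((chainComp ext n le_rfl).toFun v)) ∧
    support (gs 0) D = support (gs n) D := by
  have hlift : ∀ i (hi : i ≤ n), ∀ G ∈ D, ∀ f : SubgraphIso (gs 0) G,
      ∃ f'' : SubgraphIso (gs i) G,
        ∀ v, f.toFun v = f''.toFun ((chainComp ext i hi).toFun v) := by
    intro i
    induction i with
    | zero => intro hi G hG f; exact ⟨f, fun v => rfl⟩
    | succ i ih =>
      intro hi G hG f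
      obtain ⟨fi, hfi⟩ := ih (Nat.le_of_succ_le hi) G hG f
      obtain ⟨fi', hfi'⟩ := step_extendable (ext i hi) D (heq i hi) G hG fi
      exact ⟨fi', fun v => by rw [hfi v, hfi' _]; rfl⟩
  refine ⟨hlift n le_rfl, ?_⟩
  have h1 : ∀ i : Fin D.length,
      Nonempty (SubgraphIso (gs 0) (D.get i)) ↔ Nonempty (SubgraphIso (gs n) (D.get i)) := by
    intro i
    constructor
    · rintro ⟨f⟩
      obtain ⟨f'', _⟩ := hlift n le_rfl (D.get i) (D.get_mem i) f
      exact ⟨f''⟩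
    · rintro ⟨f⟩
      exact ⟨(chainComp ext n le_rfl).comp f⟩
  exact Nat.card_congr (Equiv.subtypeEquivRight h1)
end
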